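/- arXiv:2310.20342 — 2 statements merged into one kernel-verified Lean document; each statement's English description precedes it below -/
import Mathlib

section
/- Let ℓ, m, t be positive integers and r₁,…,r_m integers with 1 ≤ r_i < ℓ. Define f_e(y₁,…,y_m) = (∏_{i=1}^m (ℓy_i + r_i)^{e_i} − ∏_{i=1}^m r_i^{e_i})/ℓ for each tuple e with 1 ≤ |e| ≤ t. Then for every tuple e₀ with 1 ≤ |e₀| ≤ t there exist integer coefficients c_{e,e₀}, for e in the box E(e₀) = {e : 0 ≤ e_j ≤ e₀_j}, such that ℓ^{|e₀|−1}·y₁^{e₀,1}⋯y_m^{e₀,m} = ∑_{e ∈ E(e₀)} c_{e,e₀}·f_e(y₁,…,y_m), with c_{e₀,e₀} = 1 and |c_{e,e₀}| ≤ C(t,m)·∏_i r_i^{e₀,i − e_i}. -/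
/-!
Since `(ℓ yᵢ + rᵢ) - rᵢ = ℓ yᵢ`, expanding `∏ ((ℓ yᵢ + rᵢ) - rᵢ)^{e₀ᵢ} = ℓ^{|e₀|} y^{e₀}` by the
binomial theorem in each variable writes it as `∑_e c_e ∏ (ℓ yᵢ + rᵢ)^{eᵢ}` with
`c_e = ∏ binom(e₀ᵢ, eᵢ) (-rᵢ)^{e₀ᵢ - eᵢ}`. The same combination of the constants `∏ rᵢ^{eᵢ}` is
`∏ (rᵢ - rᵢ)^{e₀ᵢ} = 0`, so `∑_e c_e f_e = ℓ^{|e₀| - 1} y^{e₀}`; moreover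
`|c_e| ≤ 2^{|e₀|} ∏ rᵢ^{e₀ᵢ - eᵢ}`.
-/

/-- The polynomial `f_e = (∏ (ℓ yᵢ + rᵢ)^{eᵢ} - ∏ rᵢ^{eᵢ}) / ℓ`, over `ℚ`. -/
noncomputable def fPoly (m : ℕ) (ℓ : ℕ) (r : Fin m → ℤ) (e : Fin m → ℕ) :
    MvPolynomial (Fin m) ℚ :=
  MvPolynomial.C ((ℓ : ℚ)⁻¹) *
    (∏ i, ((ℓ : ℚ) • MvPolynomial.X i + MvPolynomial.C (r i : ℚ)) ^ e i -
      MvPolynomial.C (∏ i, (r i : ℚ) ^ e i))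

open Finset MvPolynomial

section
variable {ι R : Type*} [Fintype ι] [DecidableEq ι]

theorem prod_add_pow_eq_sum_Icc [CommSemiring R] (a b : ι → R) (n : ι → ℕ) :
    ∏ i, (a i + b i) ^ n i =
      ∑ e ∈ Icc 0 n, ∏ i, a i ^ e i * b i ^ (n i - e i) * (n i).choose (e i) := by
  simp_rw [add_pow, Nat.range_succ_eq_Icc_zero, prod_univ_sum, Pi.Icc_eq]
  rfl

def binomialShiftCoeff (n : ι → ℕ) (r : ι → ℤ) (e : ι → ℕ) : ℤ :=
  ∏ i, (n i).choose (e i) * (-r i) ^ (n i - e i)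

theorem sum_binomialShiftCoeff_mul_prod_pow [CommRing R] (n : ι → ℕ) (r : ι → ℤ)
    (a : ι → R) :
    ∑ e ∈ Icc 0 n, (binomialShiftCoeff n r e : R) * ∏ i, a i ^ e i = ∏ i, (a i - r i) ^ n i := by
  simp_rw [sub_eq_add_neg, prod_add_pow_eq_sum_Icc, binomialShiftCoeff]
  refine sum_congr rfl fun e _ => ?_
  push_cast
  rw [← prod_mul_distrib]
  exact prod_congr rfl fun i _ => by ring

omit [DecidableEq ι] in
theorem abs_binomialShiftCoeff_le (n : ι → ℕ) (r : ι → ℤ) (e : ι → ℕ) :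
    |binomialShiftCoeff n r e| ≤ 2 ^ (∑ i, n i) * ∏ i, |r i| ^ (n i - e i) := by
  rw [binomialShiftCoeff, abs_prod, ← prod_pow_eq_pow_sum, ← prod_mul_distrib]
  refine prod_le_prod (fun i _ => abs_nonneg _) fun i _ => ?_
  rw [abs_mul, abs_pow, abs_neg, Nat.abs_cast]
  gcongr
  exact_mod_cast Nat.choose_le_two_pow _ _

end

theorem sum_binomialShiftCoeff_smul_fPoly {m : ℕ} (ℓ : ℕ) (r : Fin m → ℤ) {n : Fin m → ℕ}
    (hn : n ≠ 0) :
    ∑ e ∈ Icc 0 n, (binomialShiftCoeff n r e : ℚ) • fPoly m ℓ r e =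
      C ((ℓ : ℚ)⁻¹ * ℓ ^ ∑ i, n i) * ∏ i, X i ^ n i := by
  obtain ⟨i₀, hi₀⟩ := Function.ne_iff.mp hn
  have hX : ∏ i, ((ℓ : ℚ) • X i + C (r i : ℚ) - (r i : MvPolynomial (Fin m) ℚ)) ^ n i =
      C ((ℓ : ℚ) ^ ∑ i, n i) * ∏ i, X i ^ n i := by
    simp_rw [← map_intCast (C : ℚ →+* MvPolynomial (Fin m) ℚ), add_sub_cancel_right, smul_eq_C_mul,
      mul_pow, prod_mul_distrib, ← map_pow, ← map_prod, prod_pow_eq_pow_sum]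
  have hconst : ∏ i, ((r i : ℚ) - r i) ^ n i = 0 :=
    prod_eq_zero (mem_univ i₀) (by rw [sub_self, zero_pow hi₀])
  have hconst_sum : ∑ e ∈ Icc 0 n,
      (binomialShiftCoeff n r e : MvPolynomial (Fin m) ℚ) * C (∏ i, (r i : ℚ) ^ e i) = 0 := by
    simp_rw [← map_intCast (C : ℚ →+* MvPolynomial (Fin m) ℚ), ← map_mul, ← map_sum,
      sum_binomialShiftCoeff_mul_prod_pow, hconst, map_zero]
  simp_rw [smul_eq_C_mul, map_intCast, fPoly, mul_left_comm _ (C _), mul_sub, sum_sub_distrib,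
    ← mul_sum, sum_binomialShiftCoeff_mul_prod_pow, hX]
  rw [hconst_sum, mul_zero, sub_zero, ← mul_assoc, ← map_mul]

theorem linear_combination_lemma_general (m t : ℕ) :
    ∃ C : ℝ, 0 < C ∧
      ∀ (ℓ : ℕ) (r : Fin m → ℤ), (∀ i, 1 ≤ r i) → (∀ i, r i < ℓ) →
      ∀ e₀ : Fin m → ℕ, 1 ≤ ∑ i, e₀ i → ∑ i, e₀ i ≤ t →
      ∃ c : (Fin m → ℕ) → ℤ,
        c e₀ = 1 ∧
        (∀ e ∈ Finset.Icc (fun _ => 0) e₀, (|c e| : ℝ) ≤ C * ∏ i, (r i : ℝ) ^ (e₀ i - e i)) ∧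
        (MvPolynomial.C ((ℓ : ℚ) ^ (∑ i, e₀ i - 1)) * ∏ i, MvPolynomial.X i ^ e₀ i =
          ∑ e ∈ Finset.Icc (fun _ => 0) e₀, (c e : ℚ) • fPoly m ℓ r e) := by
  refine ⟨2 ^ t, by positivity, fun ℓ r hr_pos hr_lt e₀ he₀_pos he₀_le => ?_⟩
  have he₀ : e₀ ≠ 0 := by rintro rfl; simp at he₀_pos
  obtain ⟨i₀, -⟩ := Function.ne_iff.mp he₀
  have hℓ : (ℓ : ℚ) ≠ 0 := Nat.cast_ne_zero.mpr (by linarith [hr_pos i₀, hr_lt i₀])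
  refine ⟨binomialShiftCoeff e₀ r, by simp [binomialShiftCoeff], fun e _ => ?_, ?_⟩
  · have hr_abs : ∀ i, |r i| = r i := fun i => abs_of_pos (hr_pos i)
    calc (|binomialShiftCoeff e₀ r e| : ℝ)
        ≤ 2 ^ (∑ i, e₀ i) * ∏ i, (r i : ℝ) ^ (e₀ i - e i) := by
          simpa [hr_abs] using (Int.cast_le (R := ℝ)).mpr (abs_binomialShiftCoeff_le e₀ r e)
      _ ≤ 2 ^ t * ∏ i, (r i : ℝ) ^ (e₀ i - e i) := by
          have hr_nonneg (i : Fin m) : (0 : ℝ) ≤ r i := by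
            exact_mod_cast zero_le_one.trans (hr_pos i)
          gcongr
          exacts [prod_nonneg fun i _ => pow_nonneg (hr_nonneg i) _, one_le_two]
  · rw [← Pi.zero_def, sum_binomialShiftCoeff_smul_fPoly ℓ r he₀, pow_sub₀ _ hℓ he₀_pos, pow_one,
      mul_comm ((ℓ : ℚ) ^ _)]

theorem linear_combination_lemma (m t : ℕ) (hm : 1 ≤ m) (ht : 1 ≤ t) :
    ∃ C : ℝ, 0 < C ∧
      ∀ (ℓ : ℕ) (r : Fin m → ℤ), (∀ i, 1 ≤ r i) → (∀ i, r i < ℓ) →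
      ∀ e₀ : Fin m → ℕ, 1 ≤ ∑ i, e₀ i → ∑ i, e₀ i ≤ t →
      ∃ c : (Fin m → ℕ) → ℤ,
        c e₀ = 1 ∧
        (∀ e ∈ Finset.Icc (fun _ => 0) e₀, (|c e| : ℝ) ≤ C * ∏ i, (r i : ℝ) ^ (e₀ i - e i)) ∧
        (MvPolynomial.C ((ℓ : ℚ) ^ (∑ i, e₀ i - 1)) * ∏ i, MvPolynomial.X i ^ e₀ i =
          ∑ e ∈ Finset.Icc (fun _ => 0) e₀, (c e : ℚ) • fPoly m ℓ r e) :=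
  linear_combination_lemma_general m t
end

section
/- Let f_e(y₁,…,y_m) = (∏(ℓy_i+r_i)^{e_i} − ∏r_i^{e_i})/ℓ as above, with the expansion ℓ^{|e₀|−1}∏ y_i^{e₀,i} = ∑_{e∈E(e₀)} c_{e,e₀} f_e where c_{e₀,e₀}=1. Then the integer linear map sending the tuple (x_e)_{1≤|e|≤t} to (∑_{e∈E(e₀)} c_{e,e₀} x_e)_{1≤|e₀|≤t} is injective; equivalently, the matrix M of this system, with variables ordered lexicographically, is upper triangular with all diagonal entries equal to 1, and hence has determinant 1. -/
/-- Exponent tuples `e` with `1 ≤ |e| ≤ t`. -/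
abbrev SysIdx (m t : ℕ) :=
  {e : Fin m → Fin (t + 1) // 1 ≤ ∑ i, (e i : ℕ) ∧ ∑ i, (e i : ℕ) ≤ t}

theorem triangular_system_injective (m t : ℕ)
    (c : SysIdx m t → SysIdx m t → ℤ) (hdiag : ∀ e, c e e = 1) :
    Function.Injective
      (fun (x : SysIdx m t → ℤ) (e₀ : SysIdx m t) =>
        ∑ e ∈ Finset.univ.filter (fun e : SysIdx m t => ∀ i, (e.1 i : ℕ) ≤ (e₀.1 i : ℕ)),
          c e e₀ * x e) := by
  intro x y h
  have key : ∀ n (e₀ : SysIdx m t), (∑ i, (e₀.1 i : ℕ)) ≤ n → x e₀ = y e₀ := by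
    intro n
    induction n with
    | zero =>
      intro e₀ h0
      exact absurd (le_trans e₀.2.1 h0) (by norm_num)
    | succ n ih =>
      intro e₀ hle
      have h1 := congrFun h e₀
      simp only at h1
      have hmem : e₀ ∈ Finset.univ.filter
          (fun e : SysIdx m t => ∀ i, (e.1 i : ℕ) ≤ (e₀.1 i : ℕ)) := by
        simp
      rw [← Finset.add_sum_erase _ _ hmem, ← Finset.add_sum_erase _ _ hmem] at h1
      have hrest : ∀ e ∈ (Finset.univ.filter
          (fun e : SysIdx m t => ∀ i, (e.1 i : ℕ) ≤ (e₀.1 i : ℕ))).erase e₀,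
          c e e₀ * x e = c e e₀ * y e := by
        intro e he
        have hne : e ≠ e₀ := (Finset.mem_erase.mp he).1
        have hcomp : ∀ i, (e.1 i : ℕ) ≤ (e₀.1 i : ℕ) := by
          have := (Finset.mem_erase.mp he).2
          simpa using this
        have hex : ∃ i, e.1 i ≠ e₀.1 i := by
          by_contra hc
          push_neg at hc
          exact hne (Subtype.ext (funext hc))
        obtain ⟨i, hi⟩ := hex
        have hlt : ∑ j, (e.1 j : ℕ) < ∑ j, (e₀.1 j : ℕ) := by
          apply Finset.sum_lt_sum (fun j _ => hcomp j)
          exact ⟨i, Finset.mem_univ i, lt_of_le_of_ne (hcomp i) (fun hv => hi (Fin.ext hv))⟩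
        rw [ih e (Nat.lt_succ_iff.mp (lt_of_lt_of_le hlt hle))]
      rw [Finset.sum_congr rfl hrest, hdiag, one_mul, one_mul,
        add_right_cancel_iff] at h1
      exact h1
  funext e₀
  exact key _ e₀ le_rfl
end
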